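/- arXiv:1112.3853 — 6 statements merged into one kernel-verified Lean document; each statement's English description precedes it below -/
import Mathlib

section
/- A linear map 𝒞 : Matrix n n ℂ → Matrix m m ℂ is completely positive if and only if its Choi operator C := Σ_{i,j} 𝒞(E_{ij}) ⊗ E_{ij} is positive semidefinite. -/
open ComplexOrder

noncomputable section

/-- Choi operator `∑ i j, F(E i j) ⊗ E i j` of a map between matrix algebras,
where `E i j` are the matrix units. -/
def choiFun {I O : Type} [Fintype I] [DecidableEq I]
    (F : Matrix I I ℂ → Matrix O O ℂ) : Matrix (O × I) (O × I) ℂ :=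
  ∑ i : I, ∑ j : I,
    Matrix.kroneckerMap (· * ·) (F (Matrix.single i j 1)) (Matrix.single i j 1)

/-- The extension `F ⊗ id` of a map on matrices, acting on a composite system. -/
def tensorId {I O K : Type} (F : Matrix I I ℂ → Matrix O O ℂ)
    (M : Matrix (I × K) (I × K) ℂ) : Matrix (O × K) (O × K) ℂ :=
  fun p q => F (fun i j => M (i, p.2) (j, q.2)) p.1 q.1

/-- Complete positivity of a linear map between matrix algebras: for every
`k ∈ ℕ`, `F ⊗ id_{Matrix (Fin k) (Fin k) ℂ}` preserves positive semidefiniteness. -/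
def IsCPMap {I O : Type} [Fintype I] [Fintype O]
    (F : Matrix I I ℂ →ₗ[ℂ] Matrix O O ℂ) : Prop :=
  ∀ (k : ℕ) (M : Matrix (I × Fin k) (I × Fin k) ℂ),
    M.PosSemidef → (tensorId (⇑F) M).PosSemidef

/-- Quantum channel: completely positive and trace preserving. -/
def IsCPTPMap {I O : Type} [Fintype I] [Fintype O]
    (F : Matrix I I ℂ →ₗ[ℂ] Matrix O O ℂ) : Prop :=
  IsCPMap F ∧ ∀ M : Matrix I I ℂ, (F M).trace = M.trace

/-- Partial trace over the first tensor factor. -/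
def ptr1 {O I : Type} [Fintype O] (C : Matrix (O × I) (O × I) ℂ) : Matrix I I ℂ :=
  fun i j => ∑ p : O, C (p, i) (p, j)

/-- Partial trace over the second tensor factor. -/
def ptr2 {O I : Type} [Fintype I] (C : Matrix (O × I) (O × I) ℂ) : Matrix O O ℂ :=
  fun p q => ∑ j : I, C (p, j) (q, j)

/-- `dyadM K = |K⟩⟩⟨⟨K|`, the rank-one operator associated with the
vectorization `|K⟩⟩ = ∑ i j, K i j |i⟩⊗|j⟩` of the matrix `K`. -/
def dyadM {m n : Type} (K : Matrix m n ℂ) : Matrix (m × n) (m × n) ℂ :=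
  fun p q => K p.1 p.2 * star (K q.1 q.2)

/-!
Evaluating `𝒞 ⊗ id` on the positive rank-one operator `|1⟩⟩⟨⟨1|` gives exactly the Choi
operator, so complete positivity implies its positivity. Conversely, `(𝒞 ⊗ id) M` is the
contraction of `C ⊗ M` over the input indices of `𝒞`, i.e. `Vᴴ (C ⊗ M) V` for a fixed matrix `V`
of zeros and ones, hence positive whenever `C` and `M` are.
-/

open Matrix
open scoped Kronecker

lemma choiFun_apply {I O : Type} [Fintype I] [DecidableEq I]
    (F : Matrix I I ℂ → Matrix O O ℂ) (a b : O) (i j : I) :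
    choiFun F (a, i) (b, j) = F (single i j 1) a b := by
  simp [choiFun, Matrix.sum_apply, kroneckerMap_apply, single_apply, ite_and]

lemma tensorId_apply {I O K : Type} [Fintype I] [DecidableEq I]
    (F : Matrix I I ℂ →ₗ[ℂ] Matrix O O ℂ) (M : Matrix (I × K) (I × K) ℂ)
    (a b : O) (s t : K) :
    tensorId F M (a, s) (b, t) = ∑ i, ∑ j, M (i, s) (j, t) * F (single i j 1) a b := by
  rw [tensorId, matrix_eq_sum_single (fun i j => M (i, s) (j, t))]
  have single_eq_smul (i j : I) (c : ℂ) : single i j c = c • single i j 1 := by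
    rw [smul_single, smul_eq_mul, mul_one]
  simp only [single_eq_smul _ _ (M _ _), map_sum, map_smul, Matrix.sum_apply, Matrix.smul_apply,
    smul_eq_mul]

lemma posSemidef_dyadM {m n : Type} [Finite m] [Finite n] (K : Matrix m n ℂ) :
    (dyadM K).PosSemidef :=
  posSemidef_vecMulVec_self_star fun p : m × n => K p.1 p.2

lemma choiFun_eq_tensorId_dyadM_one {I O : Type} [Fintype I] [DecidableEq I]
    (F : Matrix I I ℂ → Matrix O O ℂ) :
    choiFun F = tensorId F (dyadM (1 : Matrix I I ℂ)) := by
  ext ⟨a, s⟩ ⟨b, t⟩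
  rw [choiFun_apply]
  congr
  ext i j
  simp only [dyadM, single_apply, one_apply]
  split_ifs <;> simp_all

/-- The vector `|1⟩⟩ = ∑ i, |i⟩ ⊗ |i⟩` placed between the two copies of `I`, tensored with the
identities of `O` and `K`. -/
def contractMiddle (O I K : Type) [DecidableEq O] [DecidableEq I] [DecidableEq K] :
    Matrix ((O × I) × (I × K)) (O × K) ℂ :=
  fun x p => if x.1.1 = p.1 ∧ x.1.2 = x.2.1 ∧ x.2.2 = p.2 then 1 else 0

lemma conjTranspose_contractMiddle_mul_kronecker_mul_apply {O I K : Type}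
    [Fintype O] [Fintype I] [Fintype K] [DecidableEq O] [DecidableEq I] [DecidableEq K]
    (A : Matrix (O × I) (O × I) ℂ) (B : Matrix (I × K) (I × K) ℂ) (a b : O) (s t : K) :
    ((contractMiddle O I K)ᴴ * (A ⊗ₖ B) * contractMiddle O I K) (a, s) (b, t) =
      ∑ i, ∑ j, B (i, s) (j, t) * A (a, i) (b, j) := by
  simp only [mul_apply, conjTranspose_apply, contractMiddle, ite_and, RCLike.star_def,
    apply_ite (starRingEnd ℂ), map_one, map_zero, kroneckerMap_apply, mul_comm, mul_ite, mul_one,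
    mul_zero, Fintype.sum_prod_type, Finset.sum_ite_irrel, Finset.sum_ite_eq', Finset.mem_univ,
    ↓reduceIte, Finset.sum_const_zero, Finset.sum_ite_eq, ite_mul, one_mul, zero_mul]
  rw [Finset.sum_comm]

lemma tensorId_eq_conjTranspose_mul_kronecker_mul {I O K : Type}
    [Fintype I] [Fintype O] [Fintype K] [DecidableEq I] [DecidableEq O] [DecidableEq K]
    (F : Matrix I I ℂ →ₗ[ℂ] Matrix O O ℂ) (M : Matrix (I × K) (I × K) ℂ) :
    tensorId F M = (contractMiddle O I K)ᴴ * (choiFun F ⊗ₖ M) * contractMiddle O I K := by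
  ext ⟨a, s⟩ ⟨b, t⟩
  simp only [tensorId_apply, conjTranspose_contractMiddle_mul_kronecker_mul_apply, choiFun_apply]

lemma Matrix.PosSemidef.tensorId_of_choiFun {I O K : Type}
    [Fintype I] [Fintype O] [Fintype K] [DecidableEq I]
    {F : Matrix I I ℂ →ₗ[ℂ] Matrix O O ℂ} (hC : (choiFun F).PosSemidef)
    {M : Matrix (I × K) (I × K) ℂ} (hM : M.PosSemidef) : (tensorId F M).PosSemidef := by
  classical
  rw [tensorId_eq_conjTranspose_mul_kronecker_mul]
  exact (hC.kronecker hM).conjTranspose_mul_mul_same _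

/-- Choi's theorem: a linear map between matrix algebras is
completely positive iff its Choi operator is positive semidefinite. -/
theorem stmt1 (n m : ℕ)
    (𝒞 : Matrix (Fin n) (Fin n) ℂ →ₗ[ℂ] Matrix (Fin m) (Fin m) ℂ) :
    IsCPMap 𝒞 ↔ (choiFun ⇑𝒞).PosSemidef := by
  refine ⟨fun h => ?_, fun hC k M hM => hC.tensorId_of_choiFun hM⟩
  rw [choiFun_eq_tensorId_dyadM_one]
  exact h n _ (posSemidef_dyadM 1)

end
end

section
/- Let H_0, H_1, H_2, H_3, H_A be finite-dimensional complex Hilbert spaces, let 𝒞 : L(H_0) → L(H_1 ⊗ H_A) and 𝒟 : L(H_2 ⊗ H_A) → L(H_3) be linear maps with Choi operators C (on H_1 ⊗ H_A ⊗ H_0) and D (on H_3 ⊗ H_2 ⊗ H_A), and let ℰ : L(H_0 ⊗ H_2) → L(H_1 ⊗ H_3) be the composite map ℰ(ρ) := (id_{L(H_1)} ⊗ 𝒟)((𝒞 ⊗ id_{L(H_2)})(ρ)), with tensor factors reordered appropriately. Then the Choi operator of ℰ equals the link product C * D := Tr_{H_A}[(C ⊗ I_{H_2 ⊗ H_3})(I_{H_0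 ⊗ H_1} ⊗ D^{T_A})], where T_A denotes partial transposition on H_A and tensor factors are reordered appropriately. -/
/-!
A linear map `F` between matrix algebras is recovered from its Choi operator `C_F` by
`F M x y = ∑ k l, M k l * C_F (x, k) (y, l)`. Applying this to `𝒟` and then to `𝒞` writes
the Choi entry of the composite, an entry of `ℰ (E (i, c) (i', c'))`, as a sum over all inner
indices of entries of the matrix unit `E (i, c) (i', c')` times products of entries of `C_𝒞`
and `C_𝒟`. The matrix unit pins the `H_0` and `H_2` indices, leaving the sum over `H_A`.
-/

open ComplexOrder

noncomputable section

/-- The composite map `ℰ = (id_{L(H1)} ⊗ 𝒟) ∘ (𝒞 ⊗ id_{L(H2)})` of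
`𝒞 : L(H0) → L(H1 ⊗ HA)` and `𝒟 : L(H2 ⊗ HA) → L(H3)` (with the tensor
factors reordered appropriately). -/
def compMap {n0 n1 n2 n3 nA : ℕ}
    (𝒞 : Matrix (Fin n0) (Fin n0) ℂ →ₗ[ℂ] Matrix (Fin n1 × Fin nA) (Fin n1 × Fin nA) ℂ)
    (𝒟 : Matrix (Fin n2 × Fin nA) (Fin n2 × Fin nA) ℂ →ₗ[ℂ] Matrix (Fin n3) (Fin n3) ℂ)
    (ρ : Matrix (Fin n0 × Fin n2) (Fin n0 × Fin n2) ℂ) :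
    Matrix (Fin n1 × Fin n3) (Fin n1 × Fin n3) ℂ :=
  fun p q =>
    𝒟 (fun ca c'a' =>
        𝒞 (fun i j => ρ (i, ca.1) (j, c'a'.1)) (p.1, ca.2) (q.1, c'a'.2)) p.2 q.2

section Choi

variable {I O : Type} [Fintype I] [DecidableEq I]

lemma choiFun_apply_s3 (F : Matrix I I ℂ → Matrix O O ℂ) (x y : O) (i j : I) :
    choiFun F (x, i) (y, j) = F (Matrix.single i j 1) x y := by
  simp [choiFun, Matrix.sum_apply, Matrix.single_apply, ite_and]

/- `M` is a plain function rather than a `Matrix`, so that `simp` can rewrite `F` applied to the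
λ-terms occurring in `compMap`. -/
lemma apply_eq_sum_choiFun (F : Matrix I I ℂ →ₗ[ℂ] Matrix O O ℂ) (M : I → I → ℂ) (x y : O) :
    F M x y = ∑ i, ∑ j, M i j * choiFun F (x, i) (y, j) := by
  have hM : Matrix.of M = ∑ i, ∑ j, M i j • Matrix.single i j 1 := by
    simpa [Matrix.smul_single] using Matrix.matrix_eq_sum_single (Matrix.of M)
  change F (Matrix.of M) x y = _
  rw [hM]
  simp only [map_sum, map_smul, Matrix.sum_apply, Matrix.smul_apply, smul_eq_mul, choiFun_apply_s3]

end Choi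

/-- the Choi operator of the composite
`ℰ = (id ⊗ 𝒟) ∘ (𝒞 ⊗ id)` is the link product
`C * D = Tr_{H_A}[(C ⊗ I)(I ⊗ D^{T_A})]` of the Choi operators of `𝒞` and `𝒟`
(written entrywise, with tensor factors reordered appropriately). -/
theorem stmt3 (n0 n1 n2 n3 nA : ℕ)
    (𝒞 : Matrix (Fin n0) (Fin n0) ℂ →ₗ[ℂ] Matrix (Fin n1 × Fin nA) (Fin n1 × Fin nA) ℂ)
    (𝒟 : Matrix (Fin n2 × Fin nA) (Fin n2 × Fin nA) ℂ →ₗ[ℂ] Matrix (Fin n3) (Fin n3) ℂ) :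
    ∀ (p : Fin n1) (r : Fin n3) (i : Fin n0) (c : Fin n2)
      (p' : Fin n1) (r' : Fin n3) (i' : Fin n0) (c' : Fin n2),
      choiFun (compMap 𝒞 𝒟) ((p, r), (i, c)) ((p', r'), (i', c')) =
        ∑ a : Fin nA, ∑ a' : Fin nA,
          choiFun ⇑𝒞 ((p, a), i) ((p', a'), i') *
          choiFun ⇑𝒟 (r, (c, a)) (r', (c', a')) := by
  intro p r i c p' r' i' c'
  rw [choiFun_apply_s3]
  dsimp only [compMap]
  simp only [apply_eq_sum_choiFun 𝒟, apply_eq_sum_choiFun 𝒞]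
  simp [Matrix.single_apply, Fintype.sum_prod_type, ite_and]

end
end

section
/- Every deterministic N-comb R on finite-dimensional Hilbert spaces (H_0, …, H_{2N−1}) admits a realization by quantum channels C_i : L(H_{2i−2} ⊗ A_{i−1}) → L(H_{2i−1} ⊗ A_i) (i = 1, …, N, with A_0 = A_N = ℂ and C_1 * ⋯ * C_N = R) in which the ancilla dimensions satisfy dim A_k = rank(R^(k)) for every k = 1, …, N−1, where R^(k) are the positive semidefinite operators appearing in the comb normalization hierarchy of R. -/
open ComplexOrder

noncomputable section

/-- `Sp H k` represents the Hilbert space `H 0 ⊗ H 1 ⊗ ⋯ ⊗ H (k-1)` via its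
(finite) index type, encoded as an iterated product. -/
def Sp (H : ℕ → Type) : ℕ → Type
  | 0 => PUnit
  | (k+1) => Sp H k × H k

instance spFintype (H : ℕ → Type) [∀ i, Fintype (H i)] : ∀ k, Fintype (Sp H k)
  | 0 => inferInstanceAs (Fintype PUnit)
  | (k+1) => letI := spFintype H k; inferInstanceAs (Fintype (Sp H k × H k))

instance spDecEq (H : ℕ → Type) [∀ i, DecidableEq (H i)] : ∀ k, DecidableEq (Sp H k)
  | 0 => inferInstanceAs (DecidableEq PUnit)
  | (k+1) => letI := spDecEq H k; inferInstanceAs (DecidableEq (Sp H k × H k))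

/-- Partial trace over the last tensor factor `H k`. -/
def lastTrace {H : ℕ → Type} [∀ i, Fintype (H i)] {k : ℕ}
    (M : Matrix (Sp H (k+1)) (Sp H (k+1)) ℂ) : Matrix (Sp H k) (Sp H k) ℂ :=
  fun a b => ∑ j : H k, M (a, j) (b, j)

/-- Tensoring with the identity on a newly appended last factor `H k`:
`idExtend M = I_{H k} ⊗ M` (factors ordered with `H k` last). -/
def idExtend {H : ℕ → Type} [∀ i, DecidableEq (H i)] {k : ℕ}
    (M : Matrix (Sp H k) (Sp H k) ℂ) : Matrix (Sp H (k+1)) (Sp H (k+1)) ℂ :=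
  fun p q => (if p.2 = q.2 then (1 : ℂ) else 0) * M p.1 q.1

/-- `R` is a deterministic `N`-comb on `(H 0, …, H (2N-1))`. -/
def IsDetComb (N : ℕ) (H : ℕ → Type) [∀ i, Fintype (H i)] [∀ i, DecidableEq (H i)]
    (R : Matrix (Sp H (2*N)) (Sp H (2*N)) ℂ) : Prop :=
  ∃ Rk : (k : ℕ) → Matrix (Sp H (2*k)) (Sp H (2*k)) ℂ,
    Rk N = R ∧ Rk 0 = 1 ∧ (∀ k, k ≤ N → (Rk k).PosSemidef) ∧
    ∀ k, k < N → lastTrace (k := 2*k+1) (Rk (k+1)) = idExtend (Rk k)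

/-- The Choi operator of the chain (link product) `C 0 * C 1 * ⋯ * C (k-1)` of the
first `k` steps of a strategy, where `C i` is the Choi operator of the channel of
step `i+1`, with input wire `H (2i)`, output wire `H (2i+1)`, input ancilla `A i`
and output ancilla `A (i+1)`.  The ancillas are contracted by the link product. -/
def chain {H A : ℕ → Type} [∀ i, Fintype (H i)] [∀ i, Fintype (A i)] [∀ i, DecidableEq (A i)]
    (C : (i : ℕ) → Matrix ((H (2*i+1) × A (i+1)) × (H (2*i) × A i))
                          ((H (2*i+1) × A (i+1)) × (H (2*i) × A i)) ℂ) :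
    (k : ℕ) → Matrix (Sp H (2*k) × A k) (Sp H (2*k) × A k) ℂ
  | 0 => fun p q => if p.2 = q.2 then 1 else 0
  | (k+1) => fun p q =>
      ∑ α : A k, ∑ α' : A k,
        chain C k (p.1.1.1, α) (q.1.1.1, α') *
        C k ((p.1.2, p.2), (p.1.1.2, α)) ((q.1.2, q.2), (q.1.1.2, α'))

/-- A realization of the operator `R` as a sequence of `N` quantum channels
`𝒞 i : L(H (2i) ⊗ A i) → L(H (2i+1) ⊗ A (i+1))` (with trivial, i.e. one-dimensional,
initial and final ancillas) whose link product equals `R`. -/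
structure Realization (N : ℕ) (H : ℕ → Type) [∀ i, Fintype (H i)] [∀ i, DecidableEq (H i)]
    (R : Matrix (Sp H (2*N)) (Sp H (2*N)) ℂ) where
  A : ℕ → Type
  [instF : ∀ i, Fintype (A i)]
  [instD : ∀ i, DecidableEq (A i)]
  h0 : Unique (A 0)
  hN : Unique (A N)
  C : (i : ℕ) → Matrix ((H (2*i+1) × A (i+1)) × (H (2*i) × A i))
                       ((H (2*i+1) × A (i+1)) × (H (2*i) × A i)) ℂ
  hchan : ∀ i, i < N →
    ∃ F : Matrix (H (2*i) × A i) (H (2*i) × A i) ℂ →ₗ[ℂ]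
          Matrix (H (2*i+1) × A (i+1)) (H (2*i+1) × A (i+1)) ℂ,
      IsCPTPMap F ∧ choiFun (⇑F) = C i
  hlink : ∀ a b β β', chain C N (a, β) (b, β') = R a b



/-! Factor `Rk k = T k * (T k)ᴴ` through `ℂ^(rank (Rk k))`, with a left inverse `T' k`. The
normalization `Tr_{2k+1} (Rk (k+1)) = Rk k ⊗ 1` puts the columns of `T (k+1)` in the range of
`T k ⊗ 1 ⊗ 1`, so `V k := (T' k ⊗ 1 ⊗ 1) * T (k+1)` satisfies `(T k ⊗ 1 ⊗ 1) * V k = T (k+1)` and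
`Tr_{2k+1} (V k * (V k)ᴴ) = 1`. Read as the Choi vector of a pure channel from
`H (2k) ⊗ ℂ^(rank (Rk k))` to `H (2k+1) ⊗ ℂ^(rank (Rk (k+1)))`, `V k` is the `k`-th step of the
strategy, and by induction the first `k` steps link to the rank-one operator `|T k⟩⟨T k|` on
`Sp H (2k) ⊗ ℂ^(rank (Rk k))`. The last step traces its memory out, which turns `|T N⟩⟨T N|` into
`T N * (T N)ᴴ = R`. -/

open Matrix
open scoped Kronecker

namespace Matrix

variable {l m n p q r R : Type*}

def traceRight [AddCommMonoid R] [Fintype p] (M : Matrix (m × p) (n × p) R) : Matrix m n R :=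
  of fun i j => ∑ k, M (i, k) (j, k)

theorem trace_traceRight [AddCommMonoid R] [Fintype m] [Fintype p]
    (M : Matrix (m × p) (m × p) R) : (traceRight M).trace = M.trace := by
  simp [trace, traceRight, Fintype.sum_prod_type]

section Kronecker

variable [CommSemiring R] [Fintype m] [Fintype p] [DecidableEq p]

theorem kronecker_one_mul_apply (A : Matrix l m R) (M : Matrix (m × p) q R) (i : l) (k : p)
    (j : q) : (A ⊗ₖ (1 : Matrix p p R) * M) (i, k) j = ∑ a, A i a * M (a, k) j := by
  simp [mul_apply, Fintype.sum_prod_type, one_apply]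

theorem mul_kronecker_one_apply (M : Matrix q (m × p) R) (B : Matrix m n R) (i : q) (j : n)
    (k : p) : (M * B ⊗ₖ (1 : Matrix p p R)) i (j, k) = ∑ b, M i (b, k) * B b j := by
  simp [mul_apply, Fintype.sum_prod_type, one_apply]

theorem kronecker_one_kronecker_one_mul_apply [Fintype q] [DecidableEq q] (A : Matrix l m R)
    (M : Matrix ((m × p) × q) r R) (i : l) (k : p) (k' : q) (j : r) :
    ((A ⊗ₖ (1 : Matrix p p R)) ⊗ₖ (1 : Matrix q q R) * M) ((i, k), k') j =
      ∑ a, A i a * M ((a, k), k') j := by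
  simp [kronecker_one_mul_apply, Fintype.sum_prod_type, one_apply]

theorem traceRight_kronecker_one_mul (A : Matrix l m R) (M : Matrix (m × p) (n × p) R) :
    traceRight (A ⊗ₖ (1 : Matrix p p R) * M) = A * traceRight M := by
  ext i j
  simp only [traceRight, of_apply, kronecker_one_mul_apply]
  simp only [mul_apply, of_apply, Finset.mul_sum]
  exact Finset.sum_comm

theorem traceRight_mul_kronecker_one [Fintype n] (M : Matrix (l × p) (m × p) R)
    (B : Matrix m n R) : traceRight (M * B ⊗ₖ (1 : Matrix p p R)) = traceRight M * B := by
  ext i j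
  simp only [traceRight, of_apply, mul_kronecker_one_apply]
  simp only [mul_apply, of_apply, Finset.sum_mul]
  exact Finset.sum_comm

end Kronecker

section PosSemidef

variable {𝕜 : Type*} [RCLike 𝕜] [Fintype n]

theorem PosSemidef.exists_eq_mul_conjTranspose_of_card_eq_rank [DecidableEq n] {ι : Type*}
    [Fintype ι] [DecidableEq ι] {M : Matrix n n 𝕜} (hM : M.PosSemidef)
    (hι : Fintype.card ι = M.rank) :
    ∃ (T : Matrix n ι 𝕜) (T' : Matrix ι n 𝕜), M = T * Tᴴ ∧ T' * T = 1 := by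
  set ev := hM.1.eigenvalues
  set U : Matrix n n 𝕜 := (hM.1.eigenvectorUnitary : Matrix n n 𝕜)
  let e : ι ≃ {i // ev i ≠ 0} :=
    Fintype.equivOfCardEq (hι.trans hM.1.rank_eq_card_non_zero_eigs)
  let f : ι → n := fun s => (e s).1
  have hf : f.Injective := Subtype.val_injective.comp e.injective
  let d : n → 𝕜 := fun i => (√(ev i) : 𝕜)
  have hd : ∀ i, d i * starRingEnd 𝕜 (d i) = ev i := fun i => by
    rw [RCLike.conj_ofReal, ← RCLike.ofReal_mul, Real.mul_self_sqrt (hM.eigenvalues_nonneg i)]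
  let B := U * diagonal d
  refine ⟨B.submatrix id f, (diagonal d⁻¹ * Uᴴ).submatrix f id, ?_, ?_⟩
  · have hB : M = B * Bᴴ := by
      conv_lhs => rw [hM.1.spectral_theorem]
      simp only [B, conjTranspose_mul, diagonal_conjTranspose, Unitary.conjStarAlgAut_apply,
        mul_assoc, ← mul_assoc (diagonal d), diagonal_mul_diagonal]
      congr 3
      ext i; exact (hd i).symm
    ext a b
    rw [hB, mul_apply, mul_apply]
    refine (Fintype.sum_of_injective f hf _ _ (fun i hi => ?_) fun s => rfl).symm
    have : ev i = 0 := by_contra fun h => hi ⟨e.symm ⟨i, h⟩, by simp [f]⟩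
    simp [B, mul_diagonal, d, this]
  · rw [← submatrix_mul _ _ _ id _ Function.bijective_id, mul_assoc, ← mul_assoc Uᴴ,
      ← star_eq_conjTranspose, (hM.1.eigenvectorUnitary).2.1, one_mul, diagonal_mul_diagonal,
      submatrix_diagonal _ _ hf, ← diagonal_one]
    congr 1
    ext s
    have : ev (f s) ≠ 0 := (e s).2
    have : d (f s) ≠ 0 := by
      simpa [d] using Real.sqrt_ne_zero'.mpr ((hM.eigenvalues_nonneg _).lt_of_ne' this)
    simp [inv_mul_cancel₀ this]

theorem PosSemidef.sum_sum_submatrix {κ ι : Type*} [Fintype κ] [Fintype ι] {X : Matrix κ κ 𝕜}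
    (hX : X.PosSemidef) (f : ι → n → κ) : (∑ i, ∑ j, X.submatrix (f i) (f j)).PosSemidef := by
  classical
  open scoped MatrixOrder in
  obtain ⟨D, rfl⟩ := CStarAlgebra.nonneg_iff_eq_star_mul_self.mp hX.nonneg
  convert posSemidef_conjTranspose_mul_self (of fun t p => ∑ i, D t (f i p)) using 1
  ext p q
  simp only [sum_apply, submatrix_apply, of_apply, star_eq_conjTranspose, mul_apply,
    conjTranspose_apply, star_sum, Finset.sum_mul_sum]
  exact (Finset.sum_congr rfl fun _ _ => Finset.sum_comm).trans Finset.sum_comm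

end PosSemidef

end Matrix

section LeftInverse

variable {𝕜 W ι Y G : Type*} [RCLike 𝕜] [Fintype W] [Fintype ι] [Fintype Y] [Fintype G]
  [DecidableEq ι] [DecidableEq Y] {T : Matrix W ι 𝕜} {T' : Matrix ι W 𝕜} {S : Matrix (W × Y) G 𝕜}

/-- `Tr_Y (S * Sᴴ) = T * Tᴴ` puts the columns of `S` in the range of `T ⊗ 1`, where `T' ⊗ 1` is a
left inverse. -/
theorem kronecker_one_mul_kronecker_one_mul_of_traceRight [DecidableEq W] (hT : T' * T = 1)
    (hS : traceRight (S * Sᴴ) = T * Tᴴ) :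
    T ⊗ₖ (1 : Matrix Y Y 𝕜) * (T' ⊗ₖ (1 : Matrix Y Y 𝕜) * S) = S := by
  set Q := 1 - T * T'
  have hQT : Q * T = 0 := by simp [Q, Matrix.sub_mul, Matrix.mul_assoc, hT]
  have hQS : Q ⊗ₖ (1 : Matrix Y Y 𝕜) * S = 0 := by
    rw [← trace_mul_conjTranspose_self_eq_zero_iff, ← trace_traceRight, conjTranspose_mul,
      conjTranspose_kronecker, conjTranspose_one, ← Matrix.mul_assoc, Matrix.mul_assoc _ S,
      traceRight_mul_kronecker_one, traceRight_kronecker_one_mul, hS, ← Matrix.mul_assoc, hQT]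
    simp
  have hsplit : (T * T') ⊗ₖ (1 : Matrix Y Y 𝕜) * S + Q ⊗ₖ (1 : Matrix Y Y 𝕜) * S = S := by
    rw [← Matrix.add_mul, ← add_kronecker, add_sub_cancel, one_kronecker_one, Matrix.one_mul]
  rw [hQS, add_zero] at hsplit
  rwa [← Matrix.mul_assoc, ← mul_kronecker_mul, one_mul]

theorem traceRight_kronecker_one_mul_mul_conjTranspose (hT : T' * T = 1)
    (hS : traceRight (S * Sᴴ) = T * Tᴴ) :
    traceRight (T' ⊗ₖ (1 : Matrix Y Y 𝕜) * S * (T' ⊗ₖ (1 : Matrix Y Y 𝕜) * S)ᴴ) = 1 := by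
  rw [conjTranspose_mul, conjTranspose_kronecker, conjTranspose_one, ← Matrix.mul_assoc,
    Matrix.mul_assoc _ S, traceRight_mul_kronecker_one, traceRight_kronecker_one_mul, hS,
    ← Matrix.mul_assoc, hT, Matrix.one_mul, ← conjTranspose_mul, hT, conjTranspose_one]

end LeftInverse

theorem idExtend_eq_kronecker_one {H : ℕ → Type} [∀ i, DecidableEq (H i)] {k : ℕ}
    (M : Matrix (Sp H k) (Sp H k) ℂ) : idExtend M = M ⊗ₖ (1 : Matrix (H k) (H k) ℂ) := by
  ext p q
  exact (mul_comm _ _).trans (congrArg _ Matrix.one_apply.symm)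

section ChoiMap

variable {I O : Type} [Fintype I]

def choiMap (C : Matrix (O × I) (O × I) ℂ) : Matrix I I ℂ →ₗ[ℂ] Matrix O O ℂ where
  toFun M := of fun o o' => ∑ i, ∑ j, C (o, i) (o', j) * M i j
  map_add' M M' := by ext; simp [mul_add, Finset.sum_add_distrib]
  map_smul' c M := by ext; simp [Finset.mul_sum, mul_left_comm]

theorem choiFun_choiMap [DecidableEq I] (C : Matrix (O × I) (O × I) ℂ) :
    choiFun (choiMap C) = C := by
  ext ⟨o, i⟩ ⟨o', j⟩
  simp [choiFun, choiMap, Matrix.sum_apply, single_apply, ite_and]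

theorem isCPMap_choiMap [Fintype O] {C : Matrix (O × I) (O × I) ℂ} (hC : C.PosSemidef) :
    IsCPMap (choiMap C) := by
  intro k M hM
  have : tensorId (choiMap C) M = ∑ i, ∑ j,
      (C ⊗ₖ M).submatrix (fun p => ((p.1, i), (i, p.2))) (fun q => ((q.1, j), (j, q.2))) := by
    ext p q
    simp [tensorId, choiMap, Matrix.sum_apply]
  rw [this]
  exact (hC.kronecker hM).sum_sum_submatrix _

theorem trace_choiMap [Fintype O] [DecidableEq I] {C : Matrix (O × I) (O × I) ℂ}
    (hC : ∀ i j, ∑ o, C (o, i) (o, j) = (1 : Matrix I I ℂ) i j) (M : Matrix I I ℂ) :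
    (choiMap C M).trace = M.trace := by
  simp only [trace, diag, choiMap, LinearMap.coe_mk, AddHom.coe_mk, of_apply]
  rw [Finset.sum_comm]
  simp_rw [Finset.sum_comm (γ := O), ← Finset.sum_mul, hC, one_apply]
  simp

theorem exists_isCPTPMap_choiFun_eq [Fintype O] [DecidableEq I] {C : Matrix (O × I) (O × I) ℂ}
    (hC : C.PosSemidef) (hTP : ∀ i j, ∑ o, C (o, i) (o, j) = (1 : Matrix I I ℂ) i j) :
    ∃ F : Matrix I I ℂ →ₗ[ℂ] Matrix O O ℂ, IsCPTPMap F ∧ choiFun F = C :=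
  ⟨choiMap C, ⟨isCPMap_choiMap hC, trace_choiMap hTP⟩, choiFun_choiMap C⟩

end ChoiMap

section DilationChoi

variable {A X Y G B E : Type} [Fintype E]

/-- The Choi operator `∑ e, |w e⟩⟨w e|` with `w e ((y, β), (x, α)) = V ((α, x), y) (φ (β, e))`:
the output `G` of `V` is split by `φ` into a kept ancilla `B` and a discarded environment `E`. -/
def dilationChoi (V : Matrix ((A × X) × Y) G ℂ) (φ : B × E ≃ G) :
    Matrix ((Y × B) × (X × A)) ((Y × B) × (X × A)) ℂ :=
  let K : Matrix ((Y × B) × (X × A)) E ℂ :=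
    of fun p e => V ((p.2.2, p.2.1), p.1.1) (φ (p.1.2, e))
  K * Kᴴ

variable (V : Matrix ((A × X) × Y) G ℂ) (φ : B × E ≃ G)

theorem posSemidef_dilationChoi [Fintype A] [Fintype X] [Fintype Y] [Fintype B] :
    (dilationChoi V φ).PosSemidef :=
  posSemidef_self_mul_conjTranspose _

theorem dilationChoi_apply (y y' : Y) (β β' : B) (x x' : X) (α α' : A) :
    dilationChoi V φ ((y, β), (x, α)) ((y', β'), (x', α')) =
      ∑ e, V ((α, x), y) (φ (β, e)) * star (V ((α', x'), y') (φ (β', e))) :=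
  rfl

theorem sum_dilationChoi_apply_eq_one_apply [Fintype Y] [Fintype B] [Fintype G] [DecidableEq A]
    [DecidableEq X] (hV : traceRight (V * Vᴴ) = 1) (i j : X × A) :
    ∑ o, dilationChoi V φ (o, i) (o, j) = (1 : Matrix (X × A) (X × A) ℂ) i j := by
  obtain ⟨x, α⟩ := i
  obtain ⟨x', α'⟩ := j
  have hVxα := congrFun (congrFun hV (α, x)) (α', x')
  simp only [traceRight, of_apply, mul_apply, conjTranspose_apply] at hVxα
  calc ∑ o, dilationChoi V φ (o, (x, α)) (o, (x', α'))
      = ∑ y, ∑ γ, V ((α, x), y) γ * star (V ((α', x'), y) γ) := by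
        rw [Fintype.sum_prod_type]
        refine Finset.sum_congr rfl fun y _ => ?_
        rw [← φ.sum_comp, Fintype.sum_prod_type]
        rfl
    _ = (1 : Matrix (X × A) (X × A) ℂ) (x, α) (x', α') := by
        rw [hVxα]
        simp [one_apply, and_comm]

theorem sum_sum_mul_dilationChoi [Fintype A] [Fintype X] [Fintype Y] [DecidableEq X]
    [DecidableEq Y] {W : Type} (T : Matrix W A ℂ) (a b : W) (x x' : X) (y y' : Y) (β β' : B) :
    ∑ α, ∑ α', T a α * star (T b α') * dilationChoi V φ ((y, β), (x, α)) ((y', β'), (x', α')) =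
      ∑ e, ((T ⊗ₖ (1 : Matrix X X ℂ)) ⊗ₖ (1 : Matrix Y Y ℂ) * V) ((a, x), y) (φ (β, e)) *
        star (((T ⊗ₖ (1 : Matrix X X ℂ)) ⊗ₖ (1 : Matrix Y Y ℂ) * V) ((b, x'), y') (φ (β', e))) := by
  simp only [dilationChoi_apply, kronecker_one_kronecker_one_mul_apply, star_sum, star_mul',
    Finset.mul_sum, Finset.sum_mul]
  calc _ = ∑ α, ∑ e, ∑ α', _ := Finset.sum_congr rfl fun _ _ => Finset.sum_comm
    _ = ∑ e, ∑ α, ∑ α', _ := Finset.sum_comm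
    _ = _ := Finset.sum_congr rfl fun _ _ => Finset.sum_comm.trans <|
      Finset.sum_congr rfl fun _ _ => Finset.sum_congr rfl fun _ _ => by ring

end DilationChoi

section CombRealization

variable {N : ℕ} {H : ℕ → Type} [∀ i, Fintype (H i)]

variable (N) in
def ancillaDim (Rk : (k : ℕ) → Matrix (Sp H (2*k)) (Sp H (2*k)) ℂ) (k : ℕ) : ℕ :=
  if k < N then (Rk k).rank else 1

variable (N) in
abbrev Ancilla (Rk : (k : ℕ) → Matrix (Sp H (2*k)) (Sp H (2*k)) ℂ) (k : ℕ) : Type :=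
  Fin (ancillaDim N Rk k)

variable {Rk : (k : ℕ) → Matrix (Sp H (2*k)) (Sp H (2*k)) ℂ}

theorem ancillaDim_of_lt {k : ℕ} (hk : k < N) : ancillaDim N Rk k = (Rk k).rank := if_pos hk

theorem ancillaDim_of_not_lt {k : ℕ} (hk : ¬k < N) : ancillaDim N Rk k = 1 := if_neg hk

abbrev Ancilla.unique {k : ℕ} (h : ancillaDim N Rk k = 1) : Unique (Ancilla N Rk k) :=
  (finCongr h).unique

variable [∀ i, DecidableEq (H i)]

theorem ancillaDim_zero (h0 : Rk 0 = 1) : ancillaDim N Rk 0 = 1 := by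
  unfold ancillaDim
  split_ifs
  · rw [h0, rank_one]
    rfl
  · rfl

variable (N Rk) in
/-- `U` factors the final `Rk N`; its columns become the environment discarded by the last
channel. -/
structure CombFactorization where
  T : (k : ℕ) → Matrix (Sp H (2*k)) (Ancilla N Rk k) ℂ
  T' : (k : ℕ) → Matrix (Ancilla N Rk k) (Sp H (2*k)) ℂ
  U : (k : ℕ) → Matrix (Sp H (2*k)) (Fin (Rk k).rank) ℂ
  eq_T_mul_conjTranspose : ∀ k < N, Rk k = T k * (T k)ᴴ
  T'_mul_T : ∀ k < N, T' k * T k = 1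
  eq_U_mul_conjTranspose : ∀ k ≤ N, Rk k = U k * (U k)ᴴ

theorem CombFactorization.nonempty (hpos : ∀ k, k ≤ N → (Rk k).PosSemidef) :
    Nonempty (CombFactorization N Rk) := by
  have hT : ∀ k, ∃ (T : Matrix (Sp H (2*k)) (Ancilla N Rk k) ℂ)
      (T' : Matrix (Ancilla N Rk k) (Sp H (2*k)) ℂ), k < N → Rk k = T * Tᴴ ∧ T' * T = 1 :=
    fun k => by
      by_cases hk : k < N
      · obtain ⟨T, T', h⟩ := (hpos k hk.le).exists_eq_mul_conjTranspose_of_card_eq_rank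
          (ι := Ancilla N Rk k) (by rw [Fintype.card_fin, ancillaDim_of_lt hk])
        exact ⟨T, T', fun _ => h⟩
      · exact ⟨0, 0, fun h => absurd h hk⟩
  have hU : ∀ k, ∃ U : Matrix (Sp H (2*k)) (Fin (Rk k).rank) ℂ, k ≤ N → Rk k = U * Uᴴ :=
    fun k => by
      by_cases hk : k ≤ N
      · obtain ⟨U, -, h, -⟩ :=
          (hpos k hk).exists_eq_mul_conjTranspose_of_card_eq_rank (Fintype.card_fin _)
        exact ⟨U, fun _ => h⟩
      · exact ⟨0, fun h => absurd h hk⟩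
  choose T T' hT using hT
  choose U hU using hU
  exact ⟨⟨T, T', U, fun k hk => (hT k hk).1, fun k hk => (hT k hk).2, hU⟩⟩

namespace CombFactorization

variable (F : CombFactorization N Rk)

def stepIsometry (k : ℕ) {G : Type} (S : Matrix ((Sp H (2*k) × H (2*k)) × H (2*k+1)) G ℂ) :
    Matrix ((Ancilla N Rk k × H (2*k)) × H (2*k+1)) G ℂ :=
  (F.T' k ⊗ₖ (1 : Matrix (H (2*k)) (H (2*k)) ℂ)) ⊗ₖ (1 : Matrix (H (2*k+1)) (H (2*k+1)) ℂ) * S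

def channelChoi (i : ℕ) :
    Matrix ((H (2*i+1) × Ancilla N Rk (i+1)) × (H (2*i) × Ancilla N Rk i))
      ((H (2*i+1) × Ancilla N Rk (i+1)) × (H (2*i) × Ancilla N Rk i)) ℂ :=
  if h : i + 1 < N then dilationChoi (F.stepIsometry i (F.T (i+1))) (Equiv.prodPUnit _)
  else
    letI := Ancilla.unique (ancillaDim_of_not_lt (Rk := Rk) h)
    dilationChoi (F.stepIsometry i (F.U (i+1))) (Equiv.uniqueProd _ (Ancilla N Rk (i+1)))

theorem traceRight_mul_conjTranspose_eq
    (hnorm : ∀ k, k < N → lastTrace (k := 2*k+1) (Rk (k+1)) = idExtend (Rk k)) {i : ℕ}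
    (hi : i < N) {G : Type} [Fintype G] {S : Matrix ((Sp H (2*i) × H (2*i)) × H (2*i+1)) G ℂ}
    (hS : Rk (i+1) = S * Sᴴ) :
    traceRight (S * Sᴴ) = F.T i ⊗ₖ (1 : Matrix (H (2*i)) (H (2*i)) ℂ) *
      (F.T i ⊗ₖ (1 : Matrix (H (2*i)) (H (2*i)) ℂ))ᴴ := by
  rw [conjTranspose_kronecker, conjTranspose_one, ← mul_kronecker_mul, Matrix.one_mul,
    ← F.eq_T_mul_conjTranspose i hi, ← hS]
  exact (hnorm i hi).trans (idExtend_eq_kronecker_one _)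

theorem T'_kronecker_one_mul {i : ℕ} (hi : i < N) :
    F.T' i ⊗ₖ (1 : Matrix (H (2*i)) (H (2*i)) ℂ) * F.T i ⊗ₖ (1 : Matrix (H (2*i)) (H (2*i)) ℂ)
      = 1 := by
  rw [← mul_kronecker_mul, F.T'_mul_T i hi, Matrix.one_mul, one_kronecker_one]

theorem kronecker_mul_stepIsometry
    (hnorm : ∀ k, k < N → lastTrace (k := 2*k+1) (Rk (k+1)) = idExtend (Rk k)) {i : ℕ}
    (hi : i < N) {G : Type} [Fintype G] {S : Matrix ((Sp H (2*i) × H (2*i)) × H (2*i+1)) G ℂ}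
    (hS : Rk (i+1) = S * Sᴴ) :
    (F.T i ⊗ₖ (1 : Matrix (H (2*i)) (H (2*i)) ℂ)) ⊗ₖ (1 : Matrix (H (2*i+1)) (H (2*i+1)) ℂ) *
      F.stepIsometry i S = S :=
  kronecker_one_mul_kronecker_one_mul_of_traceRight (F.T'_kronecker_one_mul hi)
    (F.traceRight_mul_conjTranspose_eq hnorm hi hS)

theorem traceRight_stepIsometry_mul_conjTranspose
    (hnorm : ∀ k, k < N → lastTrace (k := 2*k+1) (Rk (k+1)) = idExtend (Rk k)) {i : ℕ}
    (hi : i < N) {G : Type} [Fintype G] {S : Matrix ((Sp H (2*i) × H (2*i)) × H (2*i+1)) G ℂ}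
    (hS : Rk (i+1) = S * Sᴴ) :
    traceRight (F.stepIsometry i S * (F.stepIsometry i S)ᴴ) = 1 :=
  traceRight_kronecker_one_mul_mul_conjTranspose (F.T'_kronecker_one_mul hi)
    (F.traceRight_mul_conjTranspose_eq hnorm hi hS)

theorem posSemidef_channelChoi (i : ℕ) : (F.channelChoi i).PosSemidef := by
  unfold channelChoi
  split_ifs <;> exact posSemidef_dilationChoi _ _

theorem sum_channelChoi_apply_eq_one_apply
    (hnorm : ∀ k, k < N → lastTrace (k := 2*k+1) (Rk (k+1)) = idExtend (Rk k)) {i : ℕ}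
    (hi : i < N) (p q : H (2*i) × Ancilla N Rk i) :
    ∑ o, F.channelChoi i (o, p) (o, q) = (1 : Matrix _ _ ℂ) p q := by
  unfold channelChoi
  split_ifs with h
  · exact sum_dilationChoi_apply_eq_one_apply _ _ (F.traceRight_stepIsometry_mul_conjTranspose
      hnorm hi (F.eq_T_mul_conjTranspose (i+1) h)) p q
  · exact sum_dilationChoi_apply_eq_one_apply _ _ (F.traceRight_stepIsometry_mul_conjTranspose
      hnorm hi (F.eq_U_mul_conjTranspose (i+1) hi)) p q

theorem chain_channelChoi_of_lt (h0 : Rk 0 = 1)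
    (hnorm : ∀ k, k < N → lastTrace (k := 2*k+1) (Rk (k+1)) = idExtend (Rk k)) :
    ∀ k, k < N → ∀ (a b : Sp H (2*k)) (α α' : Ancilla N Rk k),
      chain F.channelChoi k (a, α) (b, α') = F.T k a α * star (F.T k b α')
  | 0, hk, a, b, α, α' => by
    have : Subsingleton (Ancilla N Rk 0) := (Ancilla.unique (ancillaDim_zero h0)).instSubsingleton
    have : Subsingleton (Sp H (2*0)) := inferInstanceAs (Subsingleton PUnit)
    obtain rfl := Subsingleton.elim α α'
    obtain rfl := Subsingleton.elim a b
    have haa := congrFun (congrFun (F.eq_T_mul_conjTranspose 0 hk) a) a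
    rw [h0, one_apply_eq, mul_apply, Fintype.sum_subsingleton _ α] at haa
    simpa [chain] using haa
  | k + 1, hk, ((a, x), y), ((b, x'), y'), β, β' => by
    simp only [chain, chain_channelChoi_of_lt h0 hnorm k (by omega), channelChoi, dif_pos hk]
    rw [sum_sum_mul_dilationChoi, F.kronecker_mul_stepIsometry hnorm (by omega)
      (F.eq_T_mul_conjTranspose (k+1) hk), Fintype.sum_unique]
    rfl

theorem chain_channelChoi_self (h0 : Rk 0 = 1)
    (hnorm : ∀ k, k < N → lastTrace (k := 2*k+1) (Rk (k+1)) = idExtend (Rk k))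
    (a b : Sp H (2*N)) (β β' : Ancilla N Rk N) :
    chain F.channelChoi N (a, β) (b, β') = Rk N a b := by
  have : Subsingleton (Ancilla N Rk N) :=
    (Ancilla.unique (ancillaDim_of_not_lt (lt_irrefl N))).instSubsingleton
  obtain rfl := Subsingleton.elim β β'
  rcases N with _ | M
  · have : Subsingleton (Sp H (2*0)) := inferInstanceAs (Subsingleton PUnit)
    obtain rfl := Subsingleton.elim a b
    simp [chain, h0]
  · obtain ⟨⟨a, x⟩, y⟩ := a
    obtain ⟨⟨b, x'⟩, y'⟩ := b
    simp only [chain, F.chain_channelChoi_of_lt h0 hnorm M (by omega), channelChoi,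
      dif_neg (lt_irrefl _)]
    rw [sum_sum_mul_dilationChoi, F.kronecker_mul_stepIsometry hnorm (by omega)
      (F.eq_U_mul_conjTranspose _ le_rfl)]
    exact (congrFun (congrFun (F.eq_U_mul_conjTranspose _ le_rfl) _) _).symm

def realization (h0 : Rk 0 = 1)
    (hnorm : ∀ k, k < N → lastTrace (k := 2*k+1) (Rk (k+1)) = idExtend (Rk k)) :
    Realization N H (Rk N) where
  A := Ancilla N Rk
  h0 := Ancilla.unique (ancillaDim_zero h0)
  hN := Ancilla.unique (ancillaDim_of_not_lt (lt_irrefl N))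
  C := F.channelChoi
  hchan _ hi := exists_isCPTPMap_choiFun_eq (F.posSemidef_channelChoi _)
    (F.sum_channelChoi_apply_eq_one_apply hnorm hi)
  hlink := F.chain_channelChoi_self h0 hnorm

end CombFactorization

end CombRealization

/-- every deterministic `N`-comb `R`, with comb normalization
hierarchy `Rk`, admits a realization by quantum channels in which the ancilla
(quantum memory) used between step `k` and step `k+1` has dimension exactly
`rank (Rk k)`, for every `k = 1, …, N-1`. -/
theorem stmt7 (N : ℕ) (H : ℕ → Type) [∀ i, Fintype (H i)] [∀ i, DecidableEq (H i)]
    (R : Matrix (Sp H (2*N)) (Sp H (2*N)) ℂ)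
    (Rk : (k : ℕ) → Matrix (Sp H (2*k)) (Sp H (2*k)) ℂ)
    (hN : Rk N = R) (h0 : Rk 0 = 1)
    (hpos : ∀ k, k ≤ N → (Rk k).PosSemidef)
    (hnorm : ∀ k, k < N → lastTrace (k := 2*k+1) (Rk (k+1)) = idExtend (Rk k)) :
    ∃ r : Realization N H R,
      ∀ k, 1 ≤ k → k ≤ N - 1 → @Fintype.card (r.A k) (r.instF k) = (Rk k).rank := by
  subst hN
  obtain ⟨F⟩ := CombFactorization.nonempty hpos
  exact ⟨F.realization h0 hnorm, fun k hk₁ hk₂ =>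
    (Fintype.card_fin _).trans (ancillaDim_of_lt (by omega))⟩

end
end

section
/- Let 𝒞 : Matrix n n ℂ → Matrix m m ℂ be a quantum channel and d ∈ ℕ. Then there exist a finite index set I, completely positive maps ℰ_i : Matrix n n ℂ → Matrix d d ℂ (i ∈ I) such that Σ_{i ∈ I} ℰ_i is trace preserving, and quantum channels 𝒟_i : Matrix d d ℂ → Matrix m m ℂ with 𝒞 = Σ_{i ∈ I} 𝒟_i ∘ ℰ_i, if and only if the Choi operator of 𝒞 admits a decomposition C = Σ_j |K_j⟩⟩⟨⟨K_j| with matrices K_j ∈ Matrix m n ℂ satisfying rank(K_j) ≤ d for all j. -/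
open ComplexOrder

noncomputable section

/-! Every CP map has a Kraus form `M ↦ ∑ K M Kᴴ`, and the `K` of any decomposition of its Choi
operator into terms `|K⟩⟩⟨⟨K|` are Kraus operators of it. If `𝒞 = ∑ 𝒟ᵢ ∘ ℰᵢ`, products of Kraus
operators of `𝒟ᵢ` and `ℰᵢ` are Kraus operators of `𝒞` that factor through `ℂ^d`, hence have rank
at most `d`. Conversely, a Kraus operator `K` of rank at most `d` factors as `K = B * A` with
`B : ℂ^d → ℂ^m` a partial isometry and `A = Bᴴ * K` fixed by its initial projection `Bᴴ * B`.
Then `ℰ = A · Aᴴ` is CP, and `B · Bᴴ` extends to a channel, unchanged on the image of `ℰ`, by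
sending the complement of the initial projection to a fixed pure state. The `ℰᵢ` sum to a trace
preserving map because `𝒞` and the `𝒟ᵢ` are trace preserving. -/

open Matrix

section Kraus

variable {I O ι : Type} [Fintype I] [Fintype ι]

lemma choiFun_apply_s9 [DecidableEq I] (F : Matrix I I ℂ → Matrix O O ℂ) (p q : O) (k l : I) :
    choiFun F (p, k) (q, l) = F (single k l 1) p q := by
  simp [choiFun, Matrix.sum_apply, single_apply, ite_and]

lemma choiFun_injective [DecidableEq I] :
    Function.Injective fun F : Matrix I I ℂ →ₗ[ℂ] Matrix O O ℂ => choiFun F := by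
  intro F G h
  refine (Matrix.stdBasis ℂ I I).ext fun ⟨k, l⟩ => ?_
  ext p q
  simpa [stdBasis_eq_single, choiFun_apply_s9] using congrFun (congrFun h (p, k)) (q, l)

lemma dyadM_eq_vecMulVec {m n : Type} (K : Matrix m n ℂ) :
    dyadM K = vecMulVec (Function.uncurry K) (star (Function.uncurry K)) := rfl

lemma dyadM_posSemidef {m n : Type} [Fintype m] [Fintype n] (K : Matrix m n ℂ) :
    (dyadM K).PosSemidef := by
  rw [dyadM_eq_vecMulVec]
  exact posSemidef_vecMulVec_self_star _

def krausMap (K : ι → Matrix O I ℂ) : Matrix I I ℂ →ₗ[ℂ] Matrix O O ℂ where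
  toFun M := ∑ a, K a * M * (K a)ᴴ
  map_add' M N := by simp only [Matrix.mul_add, Matrix.add_mul, Finset.sum_add_distrib]
  map_smul' c M := by simp [Finset.smul_sum]

@[simp] lemma krausMap_apply (K : ι → Matrix O I ℂ) (M : Matrix I I ℂ) :
    krausMap K M = ∑ a, K a * M * (K a)ᴴ := rfl

lemma choiFun_krausMap [DecidableEq I] (K : ι → Matrix O I ℂ) :
    choiFun (krausMap K) = ∑ a, dyadM (K a) := by
  ext ⟨p, k⟩ ⟨q, l⟩
  simp [choiFun_apply_s9, Matrix.sum_apply, dyadM, mul_apply, single_apply, ite_and]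

open scoped Kronecker in
lemma tensorId_krausMap {k : Type} [Fintype k] [DecidableEq k] (K : ι → Matrix O I ℂ)
    (M : Matrix (I × k) (I × k) ℂ) :
    tensorId (krausMap K) M = krausMap (fun a => K a ⊗ₖ (1 : Matrix k k ℂ)) M := by
  ext ⟨p, x⟩ ⟨q, y⟩
  change krausMap K (of fun i j => M (i, x) (j, y)) p q = _
  simp [Matrix.sum_apply, mul_apply, Fintype.sum_prod_type, one_apply, Finset.sum_mul,
    apply_ite (starRingEnd ℂ), mul_ite]

lemma isCPMap_krausMap [Fintype O] (K : ι → Matrix O I ℂ) : IsCPMap (krausMap K) := by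
  intro k M hM
  rw [tensorId_krausMap]
  exact posSemidef_sum _ fun a _ => hM.mul_mul_conjTranspose_same _

lemma trace_krausMap [Fintype O] [DecidableEq I] {K : ι → Matrix O I ℂ}
    (hK : ∑ a, (K a)ᴴ * K a = 1) (M : Matrix I I ℂ) : (krausMap K M).trace = M.trace := by
  simp only [krausMap_apply, trace_sum, trace_mul_cycle (K _)]
  rw [← trace_sum, ← Finset.sum_mul, hK, Matrix.one_mul]

lemma choiFun_posSemidef {n : ℕ} [Fintype O] {F : Matrix (Fin n) (Fin n) ℂ →ₗ[ℂ] Matrix O O ℂ}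
    (hF : IsCPMap F) : (choiFun F).PosSemidef := by
  have : choiFun F = tensorId F (dyadM (1 : Matrix (Fin n) (Fin n) ℂ)) := by
    ext ⟨p, k⟩ ⟨q, l⟩
    refine (choiFun_apply_s9 _ p q k l).trans (congrArg (fun X => F X p q) ?_)
    ext i j
    simp only [dyadM, one_apply, single_apply]
    split_ifs <;> simp_all
  exact this ▸ hF n _ (dyadM_posSemidef 1)

open scoped MatrixOrder in
lemma exists_krausMap_eq_of_isCPMap {n : ℕ} [Fintype O] [DecidableEq O]
    {F : Matrix (Fin n) (Fin n) ℂ →ₗ[ℂ] Matrix O O ℂ} (hF : IsCPMap F) :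
    ∃ K : O × Fin n → Matrix O (Fin n) ℂ, F = krausMap K := by
  obtain ⟨B, hB⟩ := CStarAlgebra.nonneg_iff_eq_star_mul_self.mp (choiFun_posSemidef hF).nonneg
  refine ⟨fun a => of fun p i => star (B a (p, i)), choiFun_injective ?_⟩
  simp only [choiFun_krausMap, hB]
  ext x y
  simp [mul_apply, Matrix.sum_apply, dyadM, star_eq_conjTranspose]

lemma krausMap_comp_krausMap {X κ : Type} [Fintype X] [Fintype κ] (L : κ → Matrix O X ℂ)
    (K : ι → Matrix X I ℂ) :
    (krausMap L).comp (krausMap K) = krausMap (fun x : κ × ι => L x.1 * K x.2) := by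
  ext1 M
  simp [Fintype.sum_prod_type, Matrix.mul_assoc]
  exact Finset.sum_comm

lemma sum_krausMap {σ : Type} [Fintype σ] (K : σ → ι → Matrix O I ℂ) :
    ∑ s, krausMap (K s) = krausMap (fun x : σ × ι => K x.1 x.2) := by
  ext1 M
  simp [Fintype.sum_prod_type]

end Kraus

theorem exists_choiFun_eq_sum_dyadM_of_eq_sum_comp {n m d s : ℕ}
    {F : Matrix (Fin n) (Fin n) ℂ →ₗ[ℂ] Matrix (Fin m) (Fin m) ℂ}
    {E : Fin s → (Matrix (Fin n) (Fin n) ℂ →ₗ[ℂ] Matrix (Fin d) (Fin d) ℂ)}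
    {D : Fin s → (Matrix (Fin d) (Fin d) ℂ →ₗ[ℂ] Matrix (Fin m) (Fin m) ℂ)}
    (hE : ∀ i, IsCPMap (E i)) (hD : ∀ i, IsCPMap (D i)) (hF : F = ∑ i, (D i).comp (E i)) :
    ∃ (t : ℕ) (K : Fin t → Matrix (Fin m) (Fin n) ℂ),
      choiFun F = ∑ j, dyadM (K j) ∧ ∀ j, (K j).rank ≤ d := by
  choose KE hKE using fun i => exists_krausMap_eq_of_isCPMap (hE i)
  choose KD hKD using fun i => exists_krausMap_eq_of_isCPMap (hD i)
  have hFK : F = krausMap fun x : Fin s × _ × _ => KD x.1 x.2.1 * KE x.1 x.2.2 := by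
    simp only [hF, hKE, hKD, krausMap_comp_krausMap, sum_krausMap]
  let e := Fintype.equivFin (Fin s × (Fin m × Fin d) × (Fin d × Fin n))
  refine ⟨_, fun j => KD (e.symm j).1 (e.symm j).2.1 * KE (e.symm j).1 (e.symm j).2.2, ?_,
    fun j => (rank_mul_le_left _ _).trans (rank_le_width _)⟩
  rw [hFK, choiFun_krausMap]
  exact (e.symm.sum_comp fun x => dyadM (KD x.1 x.2.1 * KE x.1 x.2.2)).symm

lemma exists_isometry_mul_conjTranspose_mul_eq {m n : Type} [Fintype m] [Fintype n]
    (K : Matrix m n ℂ) : ∃ V : Matrix m (Fin K.rank) ℂ, Vᴴ * V = 1 ∧ V * Vᴴ * K = K := by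
  classical
  let S := LinearMap.range (toEuclideanLin K)
  have hS : Module.finrank ℂ S = K.rank :=
    (rank_eq_finrank_range_toLin K (EuclideanSpace.basisFun m ℂ).toBasis
      (EuclideanSpace.basisFun n ℂ).toBasis).symm
  let b := (stdOrthonormalBasis ℂ S).reindex (finCongr hS)
  let V : Matrix m (Fin K.rank) ℂ := of fun p a => (b a : EuclideanSpace ℂ m) p
  have hV : ∀ a, WithLp.toLp 2 (Vᵀ a) = b a := fun a => rfl
  have hK : ∀ j, WithLp.toLp 2 (Kᵀ j) ∈ S := fun j =>
    ⟨EuclideanSpace.single j 1, by ext p; simp [toEuclideanLin]⟩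
  refine ⟨V, ?_, ?_⟩
  · ext a a'
    rw [← inner_matrix_col_col, hV, hV, ← Submodule.coe_inner,
      orthonormal_iff_ite.mp b.orthonormal, one_apply]
  · ext p j
    have h := congrArg (fun x : S => (x : EuclideanSpace ℂ m) p) (b.sum_repr' ⟨_, hK j⟩)
    simp only [Submodule.coe_sum, Submodule.coe_smul, Submodule.coe_inner] at h
    rw [Matrix.mul_assoc, mul_apply]
    refine Eq.trans ?_ h
    simp only [WithLp.ofLp_sum, WithLp.ofLp_smul, Finset.sum_apply, Pi.smul_apply, smul_eq_mul]
    refine Finset.sum_congr rfl fun a _ => ?_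
    simp [V, mul_apply, PiLp.inner_apply, mul_comm]

lemma exists_partialIsometry_of_rank_le {m n : Type} [Fintype m] [Fintype n] {d : ℕ}
    (K : Matrix m n ℂ) (hK : K.rank ≤ d) :
    ∃ B : Matrix m (Fin d) ℂ, B * Bᴴ * B = B ∧ B * Bᴴ * K = K := by
  obtain ⟨V, hVV, hVK⟩ := exists_isometry_mul_conjTranspose_mul_eq K
  let J : Matrix (Fin K.rank) (Fin d) ℂ :=
    (1 : Matrix (Fin d) (Fin d) ℂ).submatrix (Fin.castLE hK) id
  have hJ : J * Jᴴ = 1 := by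
    rw [conjTranspose_submatrix, conjTranspose_one, ← submatrix_mul _ _ _ _ _ Function.bijective_id,
      Matrix.mul_one, submatrix_one _ (Fin.castLE_injective hK)]
  refine ⟨V * J, ?_, ?_⟩
  · simp only [conjTranspose_mul, Matrix.mul_assoc]
    rw [← Matrix.mul_assoc Vᴴ, hVV, Matrix.one_mul, ← Matrix.mul_assoc J, hJ, Matrix.one_mul]
  · simp only [conjTranspose_mul, Matrix.mul_assoc]
    rw [← Matrix.mul_assoc J, hJ, Matrix.one_mul, ← Matrix.mul_assoc, hVK]

section KrausCompletion

variable {m d κ : Type} [DecidableEq m] [Fintype κ]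

/-- The operators `vecMulVec e_{p₀} (Q b)` added to `B` send the part of the input detected by
`Q` to the pure state `|p₀⟩⟨p₀|`. -/
def krausCompletion (B : Matrix m d ℂ) (Q : Matrix κ d ℂ) (p₀ : m) : Option κ → Matrix m d ℂ :=
  fun x => x.elim B fun b => vecMulVec (Pi.single p₀ 1) (Q b)

lemma sum_conjTranspose_mul_krausCompletion [Fintype m] (B : Matrix m d ℂ) (Q : Matrix κ d ℂ)
    (p₀ : m) :
    ∑ x, (krausCompletion B Q p₀ x)ᴴ * krausCompletion B Q p₀ x = Bᴴ * B + Qᴴ * Q := by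
  simp only [Fintype.sum_option, krausCompletion, Option.elim_none, Option.elim_some,
    conjTranspose_vecMulVec, vecMulVec_mul_vecMulVec]
  congr 1
  ext i j
  simp [Matrix.sum_apply, mul_apply, vecMulVec_apply, dotProduct, Pi.single_apply]

lemma krausMap_krausCompletion_of_mul_eq_zero [Fintype d] (B : Matrix m d ℂ) {Q : Matrix κ d ℂ}
    (p₀ : m) {N : Matrix d d ℂ} (hQN : Q * N = 0) :
    krausMap (krausCompletion B Q p₀) N = B * N * Bᴴ := by
  have : ∀ b, vecMulVec (Pi.single p₀ 1) (Q b) * N = 0 := fun b => by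
    rw [vecMulVec_mul, ← mul_apply_eq_vecMul, hQN]
    ext; simp [vecMulVec_apply]
  simp [Fintype.sum_option, krausCompletion, this]

end KrausCompletion

lemma exists_factorization_of_rank_le {m n : Type} [Fintype m] [Nonempty m] [Fintype n]
    {d : ℕ} (K : Matrix m n ℂ) (hK : K.rank ≤ d) :
    ∃ (A : Matrix (Fin d) n ℂ) (L : Option (Fin d) → Matrix m (Fin d) ℂ),
      ∑ x, (L x)ᴴ * L x = 1 ∧ ∀ M : Matrix n n ℂ, krausMap L (A * M * Aᴴ) = K * M * Kᴴ := by
  classical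
  obtain ⟨B, hBB, hBK⟩ := exists_partialIsometry_of_rank_le K hK
  set P := Bᴴ * B with hPdef
  have hPH : Pᴴ = P := by rw [conjTranspose_mul, conjTranspose_conjTranspose]
  have hP : P * P = P := by rw [Matrix.mul_assoc, ← Matrix.mul_assoc B, hBB]
  have hPA : P * (Bᴴ * K) = Bᴴ * K := by rw [Matrix.mul_assoc, ← Matrix.mul_assoc B, hBK]
  refine ⟨Bᴴ * K, krausCompletion B (1 - P) (Classical.arbitrary m), ?_, fun M => ?_⟩
  · rw [sum_conjTranspose_mul_krausCompletion, ← hPdef, conjTranspose_sub, conjTranspose_one, hPH]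
    simp only [Matrix.sub_mul, Matrix.mul_sub, Matrix.one_mul, Matrix.mul_one, hP]
    abel
  · rw [krausMap_krausCompletion_of_mul_eq_zero]
    · conv_rhs => rw [← hBK]
      simp only [conjTranspose_mul, conjTranspose_conjTranspose, Matrix.mul_assoc]
    · rw [← Matrix.mul_assoc, ← Matrix.mul_assoc, Matrix.sub_mul, Matrix.one_mul, hPA, sub_self,
        Matrix.zero_mul, Matrix.zero_mul]

theorem exists_sum_comp_of_rank_le {m n ι : Type} [Fintype m] [Nonempty m] [Fintype n]
    [Fintype ι] {d : ℕ} (K : ι → Matrix m n ℂ) (hK : ∀ j, (K j).rank ≤ d) :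
    ∃ (E : ι → (Matrix n n ℂ →ₗ[ℂ] Matrix (Fin d) (Fin d) ℂ))
      (D : ι → (Matrix (Fin d) (Fin d) ℂ →ₗ[ℂ] Matrix m m ℂ)),
      (∀ j, IsCPMap (E j)) ∧ (∀ j, IsCPTPMap (D j)) ∧ krausMap K = ∑ j, (D j).comp (E j) := by
  choose A L hL hLA using fun j => exists_factorization_of_rank_le (K j) (hK j)
  refine ⟨fun j => krausMap fun _ : Unit => A j, fun j => krausMap (L j),
    fun j => isCPMap_krausMap _, fun j => ⟨isCPMap_krausMap _, trace_krausMap (hL j)⟩, ?_⟩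
  ext1 M
  simp [hLA]

/-- a quantum channel `𝒞 : L(ℂ^n) → L(ℂ^m)` factors through a
`d`-dimensional quantum memory assisted by classical information — i.e. there
are completely positive maps `ℰ i : L(ℂ^n) → L(ℂ^d)` summing to a trace
preserving map, and channels `𝒟 i : L(ℂ^d) → L(ℂ^m)`, with
`𝒞 = ∑ i, 𝒟 i ∘ ℰ i` — iff its Choi operator decomposes as
`C = ∑ j, |K j⟩⟩⟨⟨K j|` with `rank (K j) ≤ d` for all `j`. -/
theorem stmt9 (n m d : ℕ)
    (𝒞 : Matrix (Fin n) (Fin n) ℂ →ₗ[ℂ] Matrix (Fin m) (Fin m) ℂ)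
    (h𝒞 : IsCPTPMap 𝒞) :
    (∃ (s : ℕ)
       (E : Fin s → (Matrix (Fin n) (Fin n) ℂ →ₗ[ℂ] Matrix (Fin d) (Fin d) ℂ))
       (D : Fin s → (Matrix (Fin d) (Fin d) ℂ →ₗ[ℂ] Matrix (Fin m) (Fin m) ℂ)),
       (∀ i, IsCPMap (E i)) ∧
       (∀ M : Matrix (Fin n) (Fin n) ℂ, (∑ i, E i M).trace = M.trace) ∧
       (∀ i, IsCPTPMap (D i)) ∧
       (∀ M : Matrix (Fin n) (Fin n) ℂ, 𝒞 M = ∑ i, D i (E i M))) ↔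
    (∃ (t : ℕ) (K : Fin t → Matrix (Fin m) (Fin n) ℂ),
       choiFun ⇑𝒞 = ∑ j, dyadM (K j) ∧ ∀ j, (K j).rank ≤ d) := by
  constructor
  · rintro ⟨s, E, D, hE, -, hD, h𝒞ED⟩
    exact exists_choiFun_eq_sum_dyadM_of_eq_sum_comp hE (fun i => (hD i).1)
      (LinearMap.ext fun M => by simp [h𝒞ED])
  · rintro ⟨t, K, hchoi, hK⟩
    have h𝒞K : 𝒞 = krausMap K := choiFun_injective (hchoi.trans (choiFun_krausMap K).symm)
    -- `krausCompletion` needs an output basis vector; without one, `𝒞` being trace preserving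
    -- forces all traces to vanish and the empty family works.
    rcases isEmpty_or_nonempty (Fin m) with hm | hm
    · refine ⟨0, Fin.elim0, Fin.elim0, fun i => i.elim0, fun M => ?_, fun i => i.elim0,
        fun M => Subsingleton.elim _ _⟩
      rw [← h𝒞.2 M]
      simp [Matrix.trace]
    · obtain ⟨E, D, hE, hD, hsum⟩ := exists_sum_comp_of_rank_le K hK
      have h𝒞ED : ∀ M, 𝒞 M = ∑ i, D i (E i M) := fun M => by simp [h𝒞K, hsum]
      refine ⟨t, E, D, hE, fun M => ?_, hD, h𝒞ED⟩
      rw [← h𝒞.2 M, h𝒞ED, trace_sum, trace_sum]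
      exact Finset.sum_congr rfl fun i _ => ((hD i).2 _).symm

end
end

section
/- Let C be a positive semidefinite operator on ℂ^m ⊗ ℂ^n and d ∈ ℕ. If C = Σ_{i ∈ I} Q_i for a finite family of positive semidefinite operators Q_i on ℂ^m ⊗ ℂ^n with rank(Tr_{ℂ^m}[Q_i]) ≤ d for every i, then there exists a finite family of vectors ψ_j ∈ ℂ^m ⊗ ℂ^n such that C = Σ_j |ψ_j⟩⟨ψ_j| and rank(Tr_{ℂ^m}[|ψ_j⟩⟨ψ_j|]) ≤ d for every j (equivalently, each ψ_j has Schmidt rank at most d). -/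
/-!
Decompose each `Q i` into rank-one terms `|ψ⟩⟨ψ|`. Each term satisfies `0 ≤ |ψ⟩⟨ψ| ≤ Q i` in the
Loewner order; the partial trace is monotone, and `0 ≤ A ≤ B` forces `ker B ⊆ ker A`, hence
`rank A ≤ rank B`. So every `ψ` has Schmidt rank at most `rank (Tr_{ℂ^m} Q i) ≤ d`.
-/

open ComplexOrder

noncomputable section

open Matrix
open scoped MatrixOrder

theorem Matrix.rank_le_rank_of_ker_le {K m n : Type*} [Field K] [Fintype n]
    {A B : Matrix m n K} (h : LinearMap.ker B.mulVecLin ≤ LinearMap.ker A.mulVecLin) :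
    A.rank ≤ B.rank := by
  have hker := Submodule.finrank_mono h
  have hA := LinearMap.finrank_range_add_finrank_ker A.mulVecLin
  have hB := LinearMap.finrank_range_add_finrank_ker B.mulVecLin
  rw [Matrix.rank, Matrix.rank]
  omega

theorem Matrix.ker_mulVecLin_le_of_nonneg_of_le {𝕜 n : Type*} [RCLike 𝕜] [Fintype n]
    {A B : Matrix n n 𝕜} (hA : 0 ≤ A) (hAB : A ≤ B) :
    LinearMap.ker B.mulVecLin ≤ LinearMap.ker A.mulVecLin := by
  intro x hx
  rw [LinearMap.mem_ker, mulVecLin_apply] at hx ⊢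
  have hBA : star x ⬝ᵥ (B - A) *ᵥ x = -(star x ⬝ᵥ A *ᵥ x) := by
    rw [sub_mulVec, hx, zero_sub, dotProduct_neg]
  have hquad : star x ⬝ᵥ A *ᵥ x = 0 := le_antisymm
    (neg_nonneg.mp (hBA ▸ (le_iff.mp hAB).dotProduct_mulVec_nonneg x))
    (hA.posSemidef.dotProduct_mulVec_nonneg x)
  exact (hA.posSemidef.dotProduct_mulVec_zero_iff x).mp hquad

theorem Matrix.rank_le_rank_of_nonneg_of_le {𝕜 n : Type*} [RCLike 𝕜] [Fintype n]
    {A B : Matrix n n 𝕜} (hA : 0 ≤ A) (hAB : A ≤ B) : A.rank ≤ B.rank :=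
  rank_le_rank_of_ker_le (ker_mulVecLin_le_of_nonneg_of_le hA hAB)

section PartialTrace

variable {O I : Type} [Fintype O]

theorem ptr1_eq_sum_submatrix (A : Matrix (O × I) (O × I) ℂ) :
    ptr1 A = ∑ p, A.submatrix (Prod.mk p) (Prod.mk p) := by
  ext i j
  simp [ptr1, Matrix.sum_apply]

theorem ptr1_sub (A B : Matrix (O × I) (O × I) ℂ) : ptr1 (A - B) = ptr1 A - ptr1 B := by
  ext i j
  simp [ptr1, Finset.sum_sub_distrib]

theorem Matrix.PosSemidef.ptr1 {A : Matrix (O × I) (O × I) ℂ} (hA : A.PosSemidef) :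
    (ptr1 A).PosSemidef := by
  rw [ptr1_eq_sum_submatrix]
  exact posSemidef_sum _ fun p _ => hA.submatrix _

theorem ptr1_mono {A B : Matrix (O × I) (O × I) ℂ} (h : A ≤ B) : ptr1 A ≤ ptr1 B := by
  rw [le_iff, ← ptr1_sub]
  exact (le_iff.mp h).ptr1

theorem rank_ptr1_le_of_le [Fintype I] {A B : Matrix (O × I) (O × I) ℂ} (hA : 0 ≤ A)
    (hAB : A ≤ B) : (ptr1 A).rank ≤ (ptr1 B).rank :=
  rank_le_rank_of_nonneg_of_le hA.posSemidef.ptr1.nonneg (ptr1_mono hAB)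

end PartialTrace

theorem vecMulVec_self_star_le_sum {𝕜 n ι : Type*} [RCLike 𝕜] [Fintype n] [Fintype ι]
    (v : ι → n → 𝕜) (k : ι) :
    vecMulVec (v k) (star (v k)) ≤ ∑ i, vecMulVec (v i) (star (v i)) :=
  Finset.single_le_sum (fun i _ => (posSemidef_vecMulVec_self_star (v i)).nonneg)
    (Finset.mem_univ k)

theorem stmt10_general (m n d : ℕ)
    (C : Matrix (Fin m × Fin n) (Fin m × Fin n) ℂ)
    (s : ℕ) (Q : Fin s → Matrix (Fin m × Fin n) (Fin m × Fin n) ℂ)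
    (hQ : ∀ i, (Q i).PosSemidef)
    (hsum : ∑ i, Q i = C)
    (hrank : ∀ i, (ptr1 (Q i)).rank ≤ d) :
    ∃ (t : ℕ) (ψ : Fin t → (Fin m × Fin n → ℂ)),
      C = ∑ j, Matrix.vecMulVec (ψ j) (star (ψ j)) ∧
      ∀ j, (ptr1 (Matrix.vecMulVec (ψ j) (star (ψ j)))).rank ≤ d := by
  choose r v hv using fun i => posSemidef_iff_eq_sum_vecMulVec.mp (hQ i)
  let e := (Fintype.equivFin (Σ i, Fin (r i))).symm
  refine ⟨_, fun j => v (e j).1 (e j).2, ?_, fun j => ?_⟩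
  · rw [e.sum_comp (fun p => vecMulVec (v p.1 p.2) (star (v p.1 p.2))), Fintype.sum_sigma,
      ← hsum]
    exact Finset.sum_congr rfl fun i _ => hv i
  · have hle := vecMulVec_self_star_le_sum (v (e j).1) (e j).2
    rw [← hv] at hle
    exact (rank_ptr1_le_of_le (posSemidef_vecMulVec_self_star _).nonneg hle).trans (hrank _)

/-- if a positive semidefinite operator `C` on `ℂ^m ⊗ ℂ^n`
decomposes as a finite sum of positive semidefinite operators `Q i` whose
reductions `Tr_{ℂ^m}[Q i]` have rank at most `d`, then `C` decomposes as a
finite sum of rank-one operators `|ψ j⟩⟨ψ j|` with every `ψ j` of Schmidt rank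
at most `d` (i.e. `rank (Tr_{ℂ^m}[|ψ j⟩⟨ψ j|]) ≤ d`). -/
theorem stmt10 (m n d : ℕ)
    (C : Matrix (Fin m × Fin n) (Fin m × Fin n) ℂ) (hC : C.PosSemidef)
    (s : ℕ) (Q : Fin s → Matrix (Fin m × Fin n) (Fin m × Fin n) ℂ)
    (hQ : ∀ i, (Q i).PosSemidef)
    (hsum : ∑ i, Q i = C)
    (hrank : ∀ i, (ptr1 (Q i)).rank ≤ d) :
    ∃ (t : ℕ) (ψ : Fin t → (Fin m × Fin n → ℂ)),
      C = ∑ j, Matrix.vecMulVec (ψ j) (star (ψ j)) ∧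
      ∀ j, (ptr1 (Matrix.vecMulVec (ψ j) (star (ψ j)))).rank ≤ d :=
  stmt10_general m n d C s Q hQ hsum hrank

end
end

section
/- Let d ≥ 2 and let γ, δ ≥ 0 be real numbers with (d+1)γ + (d−1)δ = 2. The operator C_γ = γ P₊ + δ P₋ on ℂ^d ⊗ ℂ^d is separable (i.e., a finite sum of tensor products A_i ⊗ B_i of positive semidefinite matrices A_i, B_i ∈ Matrix d d ℂ) if and only if γ ≥ 1/(d+1). -/
/-!
Necessity: for positive semidefinite `A`, `B` one has `tr (E (A ⊗ B)) = tr (A B) ≥ 0`, so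
`tr (E C) ≥ 0` for every separable `C`. Since `E² = 1` and `tr E = d`, `tr (E C)` equals
`d (d + 1) γ / 2 - d (d - 1) δ / 2`, and with the normalisation this says `(d + 1) γ ≥ 1`.

Sufficiency: the normalisation gives
`C = δ / (d + 1) • (d • 1 - E) + ((d + 1) γ - 1) / (d + 1) • (1 + E)`, so it suffices that
`1 + E` and `d • 1 - E` are separable. Both are sums of phase twirls
`∑ v, |D_v x⟩⟨D_v x| ⊗ |D_v y⟩⟨D_v y|` over the diagonal unitaries `D_v = diag (i ^ v k)`.
Averaging over the phases keeps exactly the `((a, b), (c, e))` entries with `{a, b} = {c, e}`,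
each equal to `4 ^ d x_a x̄_c y_b ȳ_e`. Hence `4 ^ d (1 + E)` is the twirl of `(1, 1)` plus
those of `(e_i, e_i)`, and `2 · 4 ^ d (d • 1 - E)` is the sum of the twirls of
`(1, e_i - e_j)` plus twice those of `(e_i, 1 - e_i)`.
-/

open ComplexOrder

noncomputable section

/-- The swap (flip) operator `E` on `ℂ^d ⊗ ℂ^d`. -/
def swapOp (d : ℕ) : Matrix (Fin d × Fin d) (Fin d × Fin d) ℂ :=
  fun p q => if p.1 = q.2 ∧ p.2 = q.1 then 1 else 0

/-- The projector `P₊ = (I + E)/2` onto the symmetric subspace of `ℂ^d ⊗ ℂ^d`. -/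
def Pplus (d : ℕ) : Matrix (Fin d × Fin d) (Fin d × Fin d) ℂ :=
  ((1 : ℂ) / 2) • ((1 : Matrix (Fin d × Fin d) (Fin d × Fin d) ℂ) + swapOp d)

/-- The projector `P₋ = (I - E)/2` onto the antisymmetric subspace of `ℂ^d ⊗ ℂ^d`. -/
def Pminus (d : ℕ) : Matrix (Fin d × Fin d) (Fin d × Fin d) ℂ :=
  ((1 : ℂ) / 2) • ((1 : Matrix (Fin d × Fin d) (Fin d × Fin d) ℂ) - swapOp d)

open ComplexConjugate
open scoped Kronecker

namespace Matrix

variable {m n : Type*}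

def IsSeparable (M : Matrix (m × n) (m × n) ℂ) : Prop :=
  ∃ (s : ℕ) (A : Fin s → Matrix m m ℂ) (B : Fin s → Matrix n n ℂ),
    (∀ i, (A i).PosSemidef) ∧ (∀ i, (B i).PosSemidef) ∧ M = ∑ i, A i ⊗ₖ B i

theorem isSeparable_sum_kronecker {ι : Type*} [Fintype ι] {A : ι → Matrix m m ℂ}
    {B : ι → Matrix n n ℂ} (hA : ∀ i, (A i).PosSemidef) (hB : ∀ i, (B i).PosSemidef) :
    IsSeparable (∑ i, A i ⊗ₖ B i) :=
  ⟨_, A ∘ (Fintype.equivFin ι).symm, B ∘ (Fintype.equivFin ι).symm, fun _ => hA _,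
    fun _ => hB _, (Equiv.sum_comp _ fun i => A i ⊗ₖ B i).symm⟩

namespace IsSeparable

theorem zero : IsSeparable (0 : Matrix (m × n) (m × n) ℂ) :=
  ⟨0, 0, 0, finZeroElim, finZeroElim, by simp⟩

theorem add {M N : Matrix (m × n) (m × n) ℂ} (hM : IsSeparable M) (hN : IsSeparable N) :
    IsSeparable (M + N) := by
  obtain ⟨s, A, B, hA, hB, rfl⟩ := hM
  obtain ⟨t, A', B', hA', hB', rfl⟩ := hN
  simpa [Fintype.sum_sum_type] using
    isSeparable_sum_kronecker (A := Sum.elim A A') (B := Sum.elim B B')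
      (Sum.rec hA hA') (Sum.rec hB hB')

theorem sum {ι : Type*} {M : ι → Matrix (m × n) (m × n) ℂ} (s : Finset ι)
    (hM : ∀ i ∈ s, IsSeparable (M i)) : IsSeparable (∑ i ∈ s, M i) :=
  Finset.sum_induction _ _ (fun _ _ => add) zero hM

theorem smul {M : Matrix (m × n) (m × n) ℂ} (hM : IsSeparable M) {c : ℂ} (hc : 0 ≤ c) :
    IsSeparable (c • M) := by
  obtain ⟨s, A, B, hA, hB, rfl⟩ := hM
  exact ⟨s, fun i => c • A i, B, fun i => (hA i).smul hc, hB,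
    by simp [Finset.smul_sum, smul_kronecker]⟩

theorem of_smul {M : Matrix (m × n) (m × n) ℂ} {c : ℂ} (hc : 0 < c)
    (h : IsSeparable (c • M)) : IsSeparable M := by
  simpa [smul_smul, inv_mul_cancel₀ hc.ne'] using h.smul (inv_nonneg.mpr hc.le)

end IsSeparable

theorem PosSemidef.trace_mul_nonneg [Fintype n] {A B : Matrix n n ℂ}
    (hA : A.PosSemidef) (hB : B.PosSemidef) : 0 ≤ (A * B).trace := by
  simpa [trace, mul_apply, dotProduct, mulVec] using
    (hA.hadamard hB.transpose).dotProduct_mulVec_nonneg 1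

end Matrix

section PhaseTwirl

variable {n : Type*} [Fintype n] [DecidableEq n]

omit [Fintype n] in
theorem forall_count_pair_eq_iff (a b c e : n) :
    (∀ k, ({a, b} : Multiset n).count k = ({c, e} : Multiset n).count k) ↔
      (a = c ∧ b = e) ∨ (a = e ∧ b = c) := by
  rw [← Multiset.ext]
  simp only [Multiset.insert_eq_cons, Multiset.cons_eq_cons, Multiset.singleton_inj,
    Multiset.singleton_eq_cons_iff]
  grind

theorem prod_pow_count_pair {M : Type*} [CommMonoid M] (f : n → M) (a b : n) :
    ∏ k, f k ^ ({a, b} : Multiset n).count k = f a * f b := by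
  simp only [Multiset.insert_eq_cons, Multiset.count_cons, Multiset.count_singleton, pow_add,
    pow_ite, pow_one, pow_zero, Finset.prod_mul_distrib, Finset.prod_ite_eq', Finset.mem_univ,
    if_true, mul_comm]

-- `|p - q| ≤ 2 < 4`, so the fourth roots of unity detect `p = q`.
theorem sum_I_pow_pow_mul_conj_pow {p q : ℕ} (hp : p ≤ 2) (hq : q ≤ 2) :
    ∑ w : Fin 4, (Complex.I ^ (w : ℕ)) ^ p * conj (Complex.I ^ (w : ℕ)) ^ q =
      if p = q then 4 else 0 := by
  interval_cases p <;> interval_cases q <;> simp [Fin.sum_univ_four, pow_succ] <;> ring_nf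

def phaseVec (v : n → Fin 4) : n → ℂ := fun x => Complex.I ^ (v x : ℕ)

theorem sum_phaseVec_mul (a b c e : n) :
    ∑ v : n → Fin 4, phaseVec v a * phaseVec v b * (conj (phaseVec v c) * conj (phaseVec v e)) =
      if (a = c ∧ b = e) ∨ (a = e ∧ b = c) then 4 ^ Fintype.card n else 0 := by
  let g : n → Fin 4 → ℂ := fun k w =>
    (Complex.I ^ (w : ℕ)) ^ ({a, b} : Multiset n).count k *
      conj (Complex.I ^ (w : ℕ)) ^ ({c, e} : Multiset n).count k
  calc _ = ∑ v : n → Fin 4, ∏ k, g k (v k) := by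
          refine Finset.sum_congr rfl fun v _ => ?_
          simp only [g, Finset.prod_mul_distrib, phaseVec,
            prod_pow_count_pair (fun k => Complex.I ^ (v k : ℕ)),
            prod_pow_count_pair (fun k => conj (Complex.I ^ (v k : ℕ)))]
    _ = ∏ k, ∑ w, g k w := (Fintype.prod_sum g).symm
    _ = ∏ k, if ({a, b} : Multiset n).count k = ({c, e} : Multiset n).count k then (4 : ℂ)
          else 0 := by
          refine Finset.prod_congr rfl fun k _ => sum_I_pow_pow_mul_conj_pow ?_ ?_ <;>
          exact (Multiset.count_le_card _ _).trans (Multiset.card_pair _ _).le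
    _ = _ := by
          simp only [Fintype.prod_ite_zero, forall_count_pair_eq_iff, Finset.prod_const,
            Finset.card_univ]

def phaseTwirl (x y : n → ℂ) : Matrix (n × n) (n × n) ℂ :=
  ∑ v : n → Fin 4,
    Matrix.vecMulVec (phaseVec v * x) (star (phaseVec v * x)) ⊗ₖ
      Matrix.vecMulVec (phaseVec v * y) (star (phaseVec v * y))

theorem isSeparable_phaseTwirl (x y : n → ℂ) : Matrix.IsSeparable (phaseTwirl x y) :=
  Matrix.isSeparable_sum_kronecker (fun _ => Matrix.posSemidef_vecMulVec_self_star _)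
    (fun _ => Matrix.posSemidef_vecMulVec_self_star _)

theorem phaseTwirl_apply (x y : n → ℂ) (a b c e : n) :
    phaseTwirl x y (a, b) (c, e) =
      if (a = c ∧ b = e) ∨ (a = e ∧ b = c) then
        4 ^ Fintype.card n * (x a * conj (x c) * (y b * conj (y e)))
      else 0 := by
  have h : ∀ v : n → Fin 4,
      (Matrix.vecMulVec (phaseVec v * x) (star (phaseVec v * x)) ⊗ₖ
        Matrix.vecMulVec (phaseVec v * y) (star (phaseVec v * y))) (a, b) (c, e) =
      phaseVec v a * phaseVec v b * (conj (phaseVec v c) * conj (phaseVec v e)) *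
        (x a * conj (x c) * (y b * conj (y e))) := by
    intro v
    simp only [Matrix.kroneckerMap_apply, Matrix.vecMulVec_apply, Pi.mul_apply, Pi.star_apply,
      star_mul', Complex.star_def]
    ring
  rw [phaseTwirl, Matrix.sum_apply, Finset.sum_congr rfl fun v _ => h v, ← Finset.sum_mul,
    sum_phaseVec_mul]
  split_ifs <;> simp

theorem sum_sum_single_sub_single_mul_conj (b e : n) :
    ∑ i, ∑ j, (Pi.single i 1 - Pi.single j 1 : n → ℂ) b *
        conj ((Pi.single i 1 - Pi.single j 1 : n → ℂ) e) =
      2 * (Fintype.card n * (if b = e then 1 else 0) - 1) := by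
  simp [Pi.single_apply, apply_ite conj, mul_sub, Finset.sum_sub_distrib]
  split_ifs <;> ring

end PhaseTwirl

theorem swapOp_mul_apply {d : ℕ} (M : Matrix (Fin d × Fin d) (Fin d × Fin d) ℂ)
    (p q : Fin d × Fin d) : (swapOp d * M) p q = M p.swap q := by
  simp [Matrix.mul_apply, swapOp, Fintype.sum_prod_type, ite_and, Finset.sum_ite_eq, Prod.swap]

theorem swapOp_mul_self (d : ℕ) : swapOp d * swapOp d = 1 := by
  ext p q
  simp [swapOp_mul_apply, swapOp, Matrix.one_apply, Prod.ext_iff, and_comm]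

theorem trace_swapOp (d : ℕ) : (swapOp d).trace = d := by
  simp only [Matrix.trace, Matrix.diag, swapOp, Fintype.sum_prod_type]
  simp [ite_and, Finset.sum_ite_eq]

theorem trace_swapOp_mul_kronecker {d : ℕ} (A B : Matrix (Fin d) (Fin d) ℂ) :
    (swapOp d * A ⊗ₖ B).trace = (A * B).trace := by
  simp only [Matrix.trace, Matrix.diag, swapOp_mul_apply]
  simp only [Fintype.sum_prod_type, Prod.swap, Matrix.kroneckerMap_apply, Matrix.mul_apply]
  exact Finset.sum_comm

theorem Matrix.IsSeparable.trace_swapOp_mul_nonneg {d : ℕ}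
    {M : Matrix (Fin d × Fin d) (Fin d × Fin d) ℂ} (h : M.IsSeparable) :
    0 ≤ (swapOp d * M).trace := by
  obtain ⟨s, A, B, hA, hB, rfl⟩ := h
  simp only [Matrix.mul_sum, Matrix.trace_sum, trace_swapOp_mul_kronecker]
  exact Finset.sum_nonneg fun i _ => (hA i).trace_mul_nonneg (hB i)

theorem trace_swapOp_mul_smul_Pplus_add_smul_Pminus (d : ℕ) (γ δ : ℂ) :
    (swapOp d * (γ • Pplus d + δ • Pminus d)).trace =
      d * (d + 1) / 2 * γ - d * (d - 1) / 2 * δ := by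
  simp [Pplus, Pminus, Matrix.mul_add, Matrix.mul_sub, swapOp_mul_self, Matrix.trace_add,
    Matrix.trace_sub, trace_swapOp]
  ring

theorem smul_one_add_swapOp_eq (d : ℕ) :
    (4 ^ d : ℂ) • (1 + swapOp d) =
      phaseTwirl 1 1 + ∑ i, phaseTwirl (Pi.single i 1) (Pi.single i 1) := by
  ext ⟨a, b⟩ ⟨c, e⟩
  simp only [Matrix.add_apply, Matrix.smul_apply, Matrix.sum_apply, phaseTwirl_apply,
    Matrix.one_apply, swapOp, Prod.mk.injEq, Fintype.card_fin]
  by_cases h : (a = c ∧ b = e) ∨ (a = e ∧ b = c)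
  · rcases h with ⟨rfl, rfl⟩ | ⟨rfl, rfl⟩ <;> simp [Pi.single_apply, apply_ite conj] <;>
      split_ifs <;> simp_all <;> ring
  · obtain ⟨h1, h2⟩ := not_or.mp h
    simp [h1, h2]

theorem smul_natCast_smul_one_sub_swapOp_eq (d : ℕ) :
    (2 * 4 ^ d : ℂ) • ((d : ℂ) • 1 - swapOp d) =
      ∑ i, ∑ j, phaseTwirl 1 (Pi.single i 1 - Pi.single j 1) +
        (2 : ℂ) • ∑ i, phaseTwirl (Pi.single i 1) (1 - Pi.single i 1) := by
  ext ⟨a, b⟩ ⟨c, e⟩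
  simp only [Matrix.add_apply, Matrix.sub_apply, Matrix.smul_apply, Matrix.sum_apply,
    phaseTwirl_apply, Matrix.one_apply, swapOp, Prod.mk.injEq, Fintype.card_fin]
  by_cases h : (a = c ∧ b = e) ∨ (a = e ∧ b = c)
  · rcases h with ⟨rfl, rfl⟩ | ⟨rfl, rfl⟩ <;>
      simp only [and_true, true_or, or_true, if_true, Pi.one_apply, map_one, mul_one, one_mul,
        ← Finset.mul_sum, sum_sum_single_sub_single_mul_conj] <;>
      simp [Pi.single_apply, apply_ite conj] <;> split_ifs <;> simp_all <;> ring
  · obtain ⟨h1, h2⟩ := not_or.mp h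
    simp [h1, h2]

theorem isSeparable_one_add_swapOp (d : ℕ) : (1 + swapOp d).IsSeparable := by
  refine .of_smul (c := 4 ^ d) (by positivity) ?_
  rw [smul_one_add_swapOp_eq]
  exact (isSeparable_phaseTwirl _ _).add
    (Matrix.IsSeparable.sum _ fun _ _ => isSeparable_phaseTwirl _ _)

theorem isSeparable_natCast_smul_one_sub_swapOp (d : ℕ) :
    ((d : ℂ) • 1 - swapOp d).IsSeparable := by
  refine .of_smul (c := 2 * 4 ^ d) (by positivity) ?_
  rw [smul_natCast_smul_one_sub_swapOp_eq]
  exact (Matrix.IsSeparable.sum _ fun _ _ =>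
      Matrix.IsSeparable.sum _ fun _ _ => isSeparable_phaseTwirl _ _).add
    ((Matrix.IsSeparable.sum _ fun _ _ => isSeparable_phaseTwirl _ _).smul (by norm_num))

theorem smul_Pplus_add_smul_Pminus_eq (d : ℕ) {γ δ : ℂ}
    (hnorm : (d + 1) * γ + (d - 1) * δ = 2) :
    γ • Pplus d + δ • Pminus d =
      (δ / (d + 1)) • ((d : ℂ) • 1 - swapOp d) +
        (((d + 1) * γ - 1) / (d + 1)) • (1 + swapOp d) := by
  have hd : (d : ℂ) + 1 ≠ 0 := Nat.cast_add_one_ne_zero d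
  simp only [Pplus, Pminus]
  match_scalars <;> field_simp <;> linear_combination -hnorm

theorem stmt14_general (d : ℕ) (hd : 2 ≤ d) (γ δ : ℝ) (hδ : 0 ≤ δ)
    (hnorm : ((d : ℝ) + 1) * γ + ((d : ℝ) - 1) * δ = 2) :
    (∃ (s : ℕ) (A B : Fin s → Matrix (Fin d) (Fin d) ℂ),
      (∀ i, (A i).PosSemidef) ∧ (∀ i, (B i).PosSemidef) ∧
      (γ : ℂ) • Pplus d + (δ : ℂ) • Pminus d =
        ∑ i, Matrix.kroneckerMap (· * ·) (A i) (B i)) ↔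
    1 / ((d : ℝ) + 1) ≤ γ := by
  change Matrix.IsSeparable _ ↔ _
  rw [div_le_iff₀ (by positivity)]
  constructor
  · intro hsep
    have h := hsep.trace_swapOp_mul_nonneg
    rw [trace_swapOp_mul_smul_Pplus_add_smul_Pminus] at h
    have h' : 0 ≤ (d : ℝ) * (d + 1) / 2 * γ - d * (d - 1) / 2 * δ := by
      rw [← Complex.zero_le_real]
      push_cast
      exact h
    have hd' : (2 : ℝ) ≤ d := by exact_mod_cast hd
    nlinarith
  · intro hγ
    have hnormℂ : ((d : ℂ) + 1) * γ + ((d : ℂ) - 1) * δ = 2 := by exact_mod_cast hnorm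
    rw [smul_Pplus_add_smul_Pminus_eq d hnormℂ]
    have ha : (0 : ℝ) ≤ δ / (d + 1) := by positivity
    have hb : (0 : ℝ) ≤ ((d + 1) * γ - 1) / (d + 1) := div_nonneg (by linarith) (by positivity)
    refine ((isSeparable_natCast_smul_one_sub_swapOp d).smul ?_).add
      ((isSeparable_one_add_swapOp d).smul ?_)
    · exact_mod_cast ha
    · exact_mod_cast hb

/-- for `γ, δ ≥ 0` with `(d+1)γ + (d-1)δ = 2`, the operator
`C = γ P₊ + δ P₋` on `ℂ^d ⊗ ℂ^d` is separable (a finite sum of Kronecker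
products of positive semidefinite matrices) iff `γ ≥ 1/(d+1)`. -/
theorem stmt14 (d : ℕ) (hd : 2 ≤ d) (γ δ : ℝ) (hγ : 0 ≤ γ) (hδ : 0 ≤ δ)
    (hnorm : ((d : ℝ) + 1) * γ + ((d : ℝ) - 1) * δ = 2) :
    (∃ (s : ℕ) (A B : Fin s → Matrix (Fin d) (Fin d) ℂ),
      (∀ i, (A i).PosSemidef) ∧ (∀ i, (B i).PosSemidef) ∧
      (γ : ℂ) • Pplus d + (δ : ℂ) • Pminus d =
        ∑ i, Matrix.kroneckerMap (· * ·) (A i) (B i)) ↔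
    1 / ((d : ℝ) + 1) ≤ γ :=
  stmt14_general d hd γ δ hδ hnorm

end
end
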